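/- Let κ = (3−√5)/2 and λ > 0, and for ε ∈ (0, ε₀] with ε₀ = e^{−λT/κ}/√κ define ν_ε(t, x(·)) = α_ε(t)·β_ε(t, x(·)) with α_ε(t) = (e^{−λt/κ} − ε√κ)/ε, β_ε(t, x(·)) = √(ε⁴ + V(t, x(·))). Suppose V(t,x(·)) ≥ κM(t,x)², ∂_t V = 0, and ‖∇V(t,x(·))‖ ≤ 2‖x(t)‖ ≤ 2M(t,x). Then with ∂_t ν_ε(t,x(·)) = −(λ e^{−λt/κ} β_ε(t,x(·)))/(κ ε) and ∇ν_ε(t,x(·)) = α_ε(t)/(2β_ε(t,x(·))) · ∇V(t,x(·)), the dissipation inequality ∂_t ν_ε(t, x(·)) + λ·M(t,x)·‖∇ν_ε(t, x(·))‖ ≤ 0 holds for all (t, x(·)) ∈ [0,T) × C([−h,T], ℝⁿ). -/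

import Mathlib

/-! With `E = e^{-λt/κ}` and `β = √(ε⁴ + V)`, the gradient term is at most
`λ α M ‖g‖ / (2β) ≤ λ α M² / β ≤ λ α β / κ`, using `‖g‖ ≤ 2M` and `κ M² ≤ V ≤ β²`.
Since `α = (E - ε√κ)/ε ≤ E/ε`, this is dominated by `λ E β / (κ ε) = -∂ₜν_ε`.
The choice `ε ≤ e^{-λT/κ}/√κ` is exactly what makes `α ≥ 0` on `[0, T)`. -/

noncomputable section

/-- The constant `κ = (3 - √5)/2`. -/
def kap : ℝ := (3 - Real.sqrt 5) / 2

open Real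

lemma kap_pos : 0 < kap := by
  have : √5 < 3 := by rw [sqrt_lt' (by norm_num)]; norm_num
  unfold kap
  linarith

lemma mul_norm_smul_le_of_mul_sq_le {F : Type*} [NormedAddCommGroup F] [NormedSpace ℝ F]
    {κ M α β : ℝ} {g : F} (hκ : 0 < κ) (hβ : 0 < β) (hα : 0 ≤ α) (hM : 0 ≤ M)
    (hg : ‖g‖ ≤ 2 * M) (hMβ : κ * M ^ 2 ≤ β ^ 2) :
    M * ‖(α / (2 * β)) • g‖ ≤ α * β / κ :=
  calc M * ‖(α / (2 * β)) • g‖ = M * (α / (2 * β) * ‖g‖) := by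
        rw [norm_smul, norm_of_nonneg (by positivity)]
    _ ≤ M * (α / (2 * β) * (2 * M)) := by gcongr
    _ = α / β * M ^ 2 := by field_simp
    _ ≤ α / β * (β ^ 2 / κ) := by
        gcongr
        rw [le_div_iff₀ hκ]
        linarith
    _ = α * β / κ := by field_simp

lemma neg_div_add_mul_norm_smul_nonpos {F : Type*} [NormedAddCommGroup F] [NormedSpace ℝ F]
    {κ lam ε E M α β : ℝ} {g : F} (hκ : 0 < κ) (hlam : 0 ≤ lam) (hε : 0 < ε) (hβ : 0 < β)
    (hα : 0 ≤ α) (hαE : α ≤ E / ε) (hM : 0 ≤ M) (hg : ‖g‖ ≤ 2 * M)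
    (hMβ : κ * M ^ 2 ≤ β ^ 2) :
    -(lam * E * β) / (κ * ε) + lam * M * ‖(α / (2 * β)) • g‖ ≤ 0 := by
  have hgrad : lam * M * ‖(α / (2 * β)) • g‖ ≤ lam * E * β / (κ * ε) :=
    calc lam * M * ‖(α / (2 * β)) • g‖ = lam * (M * ‖(α / (2 * β)) • g‖) := by ring
      _ ≤ lam * (α * β / κ) := by gcongr; exact mul_norm_smul_le_of_mul_sq_le hκ hβ hα hM hg hMβ
      _ ≤ lam * (E / ε * β / κ) := by gcongr
      _ = lam * E * β / (κ * ε) := by field_simp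
  rw [neg_div]
  linarith

theorem stmt11_general (n : ℕ) (lam T : ℝ) (hlam : 0 < lam)
    (ε : ℝ) (hε : ε ∈ Set.Ioc 0 (Real.exp (-(lam * T) / kap) / Real.sqrt kap))
    (t : ℝ) (ht : t ∈ Set.Ico 0 T)
    (Mv bn Vv : ℝ) (g : EuclideanSpace ℝ (Fin n))
    (hMv : 0 ≤ Mv) (hbn : bn ≤ Mv)
    (hVlow : kap * Mv ^ 2 ≤ Vv)
    (hgrad : ‖g‖ ≤ 2 * bn) :
    -(lam * Real.exp (-(lam * t) / kap) * Real.sqrt (ε ^ 4 + Vv)) / (kap * ε)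
      + lam * Mv *
        ‖(((Real.exp (-(lam * t) / kap) - ε * Real.sqrt kap) / ε) /
            (2 * Real.sqrt (ε ^ 4 + Vv))) • g‖ ≤ 0 := by
  obtain ⟨hε0, hεT⟩ := hε
  have hsqrt_kap : 0 < √kap := sqrt_pos.2 kap_pos
  have hexp : exp (-(lam * T) / kap) ≤ exp (-(lam * t) / kap) := by
    gcongr
    · exact kap_pos.le
    · exact ht.2.le
  have hεκ : ε * √kap ≤ exp (-(lam * T) / kap) := (le_div_iff₀ hsqrt_kap).1 hεT
  have hα : 0 ≤ (exp (-(lam * t) / kap) - ε * √kap) / ε :=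
    div_nonneg (by linarith) hε0.le
  have hαE : (exp (-(lam * t) / kap) - ε * √kap) / ε ≤ exp (-(lam * t) / kap) / ε := by
    gcongr
    exact sub_le_self _ (by positivity)
  have hβ_arg : 0 < ε ^ 4 + Vv := by nlinarith [kap_pos, sq_nonneg Mv, pow_pos hε0 4]
  refine neg_div_add_mul_norm_smul_nonpos kap_pos hlam.le hε0 (sqrt_pos.2 hβ_arg) hα hαE hMv
    (by linarith) ?_
  rw [sq_sqrt hβ_arg.le]
  nlinarith [pow_pos hε0 4]

theorem stmt11 (n : ℕ) (lam T h : ℝ) (hlam : 0 < lam) (hT : 0 < T) (hh : 0 < h)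
    (ε : ℝ) (hε : ε ∈ Set.Ioc 0 (Real.exp (-(lam * T) / kap) / Real.sqrt kap))
    (t : ℝ) (ht : t ∈ Set.Ico 0 T)
    (Mv bn Vv : ℝ) (g : EuclideanSpace ℝ (Fin n))
    (hMv : 0 ≤ Mv) (hbn : bn ≤ Mv)
    (hVlow : kap * Mv ^ 2 ≤ Vv)
    (hdtV : (0 : ℝ) = 0)
    (hgrad : ‖g‖ ≤ 2 * bn) :
    -(lam * Real.exp (-(lam * t) / kap) * Real.sqrt (ε ^ 4 + Vv)) / (kap * ε)
      + lam * Mv *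
        ‖(((Real.exp (-(lam * t) / kap) - ε * Real.sqrt kap) / ε) /
            (2 * Real.sqrt (ε ^ 4 + Vv))) • g‖ ≤ 0 :=
  stmt11_general n lam T hlam ε hε t ht Mv bn Vv g hMv hbn hVlow hgrad
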